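/- Let z : ZMod (2t) → ℤ satisfy |z(k+1) - z(k)| = 1 and z(k+t) = t - z(k) for all k. Then the number of local minima of z equals (1/(4t))·∑_{k=0}^{2t-1} |ẑ(k)|²·(cos(πk/t) - 1)². -/

import Mathlib

/-- Number of local minima of a `2t`-periodic integer sequence. -/
def minimaCount (t : ℕ) (z : ZMod (2*t) → ℤ) : ℕ :=
  ((Finset.range (2*t)).filter (fun k : ℕ =>
    z ((k : ZMod (2*t)) - 1) > z (k : ZMod (2*t)) ∧
    z ((k : ZMod (2*t)) + 1) > z (k : ZMod (2*t)))).card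

/-- Discrete Fourier transform of a `2t`-periodic sequence,
using the primitive `2t`-th root of unity `exp(-πi/t)`. -/
noncomputable def dft (t : ℕ) (z : ZMod (2*t) → ℂ) (k : ℕ) : ℂ :=
  ∑ j ∈ Finset.range (2*t),
    z (j : ZMod (2*t)) * Complex.exp (-(Real.pi : ℂ) * Complex.I * k * j / t)

/-!
Let `Δz(x) = 2 z(x) - z(x + 1) - z(x - 1)`. For a walk with steps `±1`, `Δz` is `-2` at a local
minimum, `2` at a local maximum and `0` elsewhere, so `(Δz)² = 8·[x is a local minimum] + 2 Δz`;
since `Δz` sums to zero around the cycle, `∑ (Δz)² = 8 · #minima`. On the Fourier side `Δ` acts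
by the multiplier `2 - 2 cos (π k / t)`, and Parseval turns `∑ (Δz)²` into
`(1 / 2t) ∑ |ẑ(k)|² · 4 (cos (π k / t) - 1)²`.
-/

open Finset
open scoped ZMod

namespace ZMod

variable {N : ℕ}

def secondDiff {M : Type*} [AddCommGroup M] (Φ : ZMod N → M) : ZMod N → M :=
  2 • Φ - (fun x => Φ (x + 1)) - (fun x => Φ (x - 1))

lemma secondDiff_intCast (z : ZMod N → ℤ) (x : ZMod N) :
    ((secondDiff z x : ℤ) : ℂ) = secondDiff (fun j => (z j : ℂ)) x := by
  simp [secondDiff]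

variable [NeZero N]

lemma sum_range_natCast {M : Type*} [AddCommMonoid M] (f : ZMod N → M) :
    ∑ j ∈ range N, f j = ∑ x : ZMod N, f x := by
  refine sum_nbij' (↑) val (by simp) (by simp [val_lt]) (fun j hj => ?_) (by simp) (by simp)
  simp [val_cast_of_lt (mem_range.mp hj)]

lemma card_filter_range_natCast (p : ZMod N → Prop) [DecidablePred p] :
    #((range N).filter fun j : ℕ => p j) = #{x | p x} := by
  simpa only [card_filter] using sum_range_natCast fun x => if p x then 1 else 0

section Fourier

variable {E : Type*} [AddCommGroup E] [Module ℂ E]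

lemma dft_comp_add_right (Φ : ZMod N → E) (a k : ZMod N) :
    𝓕 (fun j => Φ (j + a)) k = stdAddChar (a * k) • 𝓕 Φ k := by
  simp only [dft_apply, smul_sum, smul_smul]
  refine Fintype.sum_equiv (Equiv.addRight a) _ _ fun j => ?_
  rw [Equiv.coe_addRight, ← AddChar.map_add_eq_mul]
  ring_nf

lemma dft_secondDiff (Φ : ZMod N → E) (k : ZMod N) :
    𝓕 (secondDiff Φ) k = (2 - stdAddChar k - stdAddChar (-k)) • 𝓕 Φ k := by
  have hsub := dft_comp_add_right Φ (-1) k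
  simp only [← sub_eq_add_neg, neg_one_mul] at hsub
  simp only [secondDiff, map_sub, map_nsmul, Pi.sub_apply, Pi.smul_apply, hsub,
    dft_comp_add_right Φ 1 k, one_mul, sub_smul, ofNat_smul_eq_nsmul]

lemma two_sub_stdAddChar_sub_stdAddChar_neg (k : ℤ) :
    2 - stdAddChar (k : ZMod N) - stdAddChar (-k : ZMod N) =
      ((2 - 2 * Real.cos (2 * Real.pi * k / N) : ℝ) : ℂ) := by
  rw [← Int.cast_neg, stdAddChar_coe, stdAddChar_coe]
  push_cast
  rw [Complex.two_cos]
  ring_nf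

lemma sum_norm_sq_dft (Φ : ZMod N → ℂ) : ∑ k, ‖𝓕 Φ k‖ ^ 2 = N * ∑ j, ‖Φ j‖ ^ 2 := by
  have horth (j j' : ZMod N) : ∑ k, stdAddChar (k * (j' - j)) = if j = j' then (N : ℂ) else 0 := by
    rw [AddChar.sum_mulShift _ (isPrimitive_stdAddChar N), ZMod.card]
    simp [sub_eq_zero, eq_comm]
  apply Complex.ofReal_injective
  push_cast
  simp_rw [← Complex.mul_conj', dft_apply, map_sum, smul_eq_mul, map_mul, ← AddChar.map_neg_eq_conj,
    neg_neg, sum_mul_sum, mul_sum]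
  calc ∑ k, ∑ j, ∑ j', stdAddChar (-(j * k)) * Φ j * (stdAddChar (j' * k) * (starRingEnd ℂ) (Φ j'))
      = ∑ j, ∑ j', Φ j * (starRingEnd ℂ) (Φ j') * ∑ k, stdAddChar (k * (j' - j)) := by
        rw [sum_comm]
        refine sum_congr rfl fun j _ => ?_
        rw [sum_comm]
        refine sum_congr rfl fun j' _ => ?_
        rw [mul_sum]
        refine sum_congr rfl fun k _ => ?_
        rw [mul_sub, sub_eq_neg_add, AddChar.map_add_eq_mul]
        ring_nf
    _ = ∑ j, (N : ℂ) * (Φ j * (starRingEnd ℂ) (Φ j)) := by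
        simp [horth, mul_comm]

lemma norm_sq_dft_secondDiff (Φ : ZMod N → ℂ) (k : ℤ) :
    ‖𝓕 (secondDiff Φ) k‖ ^ 2 = 4 * (Real.cos (2 * Real.pi * k / N) - 1) ^ 2 * ‖𝓕 Φ k‖ ^ 2 := by
  rw [dft_secondDiff, two_sub_stdAddChar_sub_stdAddChar_neg, norm_smul, Complex.norm_real,
    Real.norm_eq_abs, mul_pow, sq_abs]
  ring

end Fourier

lemma sum_secondDiff {M : Type*} [AddCommGroup M] (Φ : ZMod N → M) : ∑ x, secondDiff Φ x = 0 := by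
  have hadd : ∑ x, Φ (x + 1) = ∑ x, Φ x := Equiv.sum_comp (Equiv.addRight 1) Φ
  have hsub : ∑ x, Φ (x - 1) = ∑ x, Φ x := Equiv.sum_comp (Equiv.subRight 1) Φ
  simp only [secondDiff, two_nsmul, Pi.sub_apply, Pi.add_apply, sum_sub_distrib, sum_add_distrib,
    hadd, hsub, add_sub_cancel_right, sub_self]

end ZMod

open ZMod (secondDiff)

lemma sq_two_mul_sub_sub_of_abs_sub_eq_one {p q r : ℤ} (hpq : |q - p| = 1) (hqr : |r - q| = 1) :
    (2 * q - r - p) ^ 2 = 8 * (if p > q ∧ r > q then 1 else 0) + 2 * (2 * q - r - p) := by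
  rcases abs_eq_abs.mp (hpq.trans abs_one.symm) with h₁ | h₁ <;>
    rcases abs_eq_abs.mp (hqr.trans abs_one.symm) with h₂ | h₂ <;>
    split_ifs <;> first | omega | nlinarith

lemma sum_sq_secondDiff_eq_eight_mul_card {N : ℕ} [NeZero N] {z : ZMod N → ℤ}
    (hstep : ∀ k, |z (k + 1) - z k| = 1) :
    ∑ x, secondDiff z x ^ 2 = 8 * #{x | z (x - 1) > z x ∧ z (x + 1) > z x} := by
  have hpoint (x : ZMod N) : secondDiff z x ^ 2 =
      8 * (if z (x - 1) > z x ∧ z (x + 1) > z x then 1 else 0) + 2 * secondDiff z x := by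
    have hprev := hstep (x - 1)
    rw [sub_add_cancel] at hprev
    simpa [secondDiff] using sq_two_mul_sub_sub_of_abs_sub_eq_one hprev (hstep x)
  simp only [hpoint, sum_add_distrib, ← mul_sum, ZMod.sum_secondDiff, sum_boole]
  simp

lemma dft_eq_zmod_dft {t : ℕ} [NeZero (2 * t)] (Φ : ZMod (2 * t) → ℂ) (k : ℕ) :
    dft t Φ k = ZMod.dft Φ k := by
  have ht : (t : ℂ) ≠ 0 := by
    have := NeZero.ne (2 * t)
    exact_mod_cast (by omega : t ≠ 0)
  rw [dft, ZMod.dft_apply, ← ZMod.sum_range_natCast]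
  refine sum_congr rfl fun j _ => ?_
  have hcast : -((j : ZMod (2 * t)) * k) = ((-(j * k : ℤ)) : ℤ) := by push_cast; ring
  rw [hcast, ZMod.stdAddChar_coe, smul_eq_mul, mul_comm]
  congr 2
  push_cast
  field_simp

theorem minima_eq_cos_sub_one_formula_general (t : ℕ) (ht : 2 ≤ t) (z : ZMod (2*t) → ℤ)
    (hstep : ∀ k : ZMod (2*t), |z (k + 1) - z k| = 1) :
    (minimaCount t z : ℝ) =
      (1/(4*(t:ℝ))) * ∑ k ∈ Finset.range (2*t),
        (‖dft t (fun j => (z j : ℂ)) k‖)^2 * (Real.cos (Real.pi * k / t) - 1)^2 := by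
  have : NeZero (2 * t) := ⟨by omega⟩
  set Z : ZMod (2 * t) → ℂ := fun j => (z j : ℂ)
  have hfourier (k : ℕ) : ‖ZMod.dft (secondDiff Z) k‖ ^ 2 =
      4 * (‖dft t Z k‖ ^ 2 * (Real.cos (Real.pi * k / t) - 1) ^ 2) := by
    have hangle : 2 * Real.pi * k / (2 * t : ℕ) = Real.pi * k / t := by
      push_cast
      field_simp
    rw [dft_eq_zmod_dft, ← Int.cast_natCast, ZMod.norm_sq_dft_secondDiff, Int.cast_natCast, hangle]
    ring
  have hcount : ∑ j, ‖secondDiff Z j‖ ^ 2 = 8 * (minimaCount t z : ℝ) := by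
    simp only [Z, ← ZMod.secondDiff_intCast, Complex.norm_intCast, sq_abs]
    rw [minimaCount,
      ZMod.card_filter_range_natCast fun x => z (x - 1) > z x ∧ z (x + 1) > z x]
    exact_mod_cast sum_sq_secondDiff_eq_eight_mul_card hstep
  have hparseval := ZMod.sum_norm_sq_dft (secondDiff Z)
  rw [← ZMod.sum_range_natCast, sum_congr rfl fun k _ => hfourier k, ← mul_sum, hcount] at hparseval
  have htR : (t : ℝ) ≠ 0 := Nat.cast_ne_zero.mpr (by omega)
  field_simp
  push_cast at hparseval
  linarith

theorem minima_eq_cos_sub_one_formula (t : ℕ) (ht : 2 ≤ t) (z : ZMod (2*t) → ℤ)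
    (hstep : ∀ k : ZMod (2*t), |z (k + 1) - z k| = 1)
    (hant : ∀ k : ZMod (2*t), z (k + (t : ZMod (2*t))) = (t : ℤ) - z k) :
    (minimaCount t z : ℝ) =
      (1/(4*(t:ℝ))) * ∑ k ∈ Finset.range (2*t),
        (‖dft t (fun j => (z j : ℂ)) k‖)^2 * (Real.cos (Real.pi * k / t) - 1)^2 :=
  minima_eq_cos_sub_one_formula_general t ht z hstep
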